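/- Consistency of expression values: if Σ;Γ;Δ ⊢ (envS,envV) (well-typedness), Γ ⊢ (envS,envV) (consistency), and Σ;Γ;Δ ⊨_{B_s} ⟨e,(envS,envV)⟩ → v, then v being an address implies v ∈ dom(envS). -/
import Mathlib


set_option autoImplicit true

namespace TinySol

/-- Variable names. -/
abbrev VarName := String
/-- Field names. -/
abbrev FieldName := String
/-- Method names. -/
abbrev MethodName := String
/-- Addresses. -/
abbrev Addr := String
/-- Interface names. -/
abbrev IfaceName := String

/-- Values of TinySol. -/
inductive Value where
  | int (z : ℤ)
  | bool (b : Bool)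
  | method (f : MethodName)
  | addr (X : Addr)
  deriving DecidableEq

/-- Base types. -/
inductive BaseTy where
  | idf
  | int
  | bool
  | iface (I : IfaceName)
  deriving DecidableEq

/-- Expression/container types `B_s`. -/
abbrev Ty (S : Type*) := BaseTy × S

/-- Variable environments. -/
abbrev VarEnv := VarName → Option Value
/-- Field environments. -/
abbrev FieldEnv := FieldName → Option Value
/-- States. -/
abbrev State := Addr → Option FieldEnv
/-- Type environments for local variables. -/
abbrev TyEnv (S : Type*) := VarName → Option (Ty S)

/-- The environment `Γ`: interface types of addresses and member signatures of interfaces. -/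
structure GammaEnv (S : Type*) where
  addrTy : Addr → Option (IfaceName × S)
  fieldTy : IfaceName → FieldName → Option (Ty S)
  methodTy : IfaceName → MethodName → Option (List (Ty S) × S)

/-- The environment `Σ`: the declared interface hierarchy. -/
abbrev SigmaEnv := IfaceName → Option IfaceName

/-- Subtyping on base types induced by `Σ`. -/
inductive Subty (Sg : SigmaEnv) : BaseTy → BaseTy → Prop where
  | refl (B : BaseTy) : Subty Sg B B
  | trans {B1 B2 B3 : BaseTy} : Subty Sg B1 B2 → Subty Sg B2 B3 → Subty Sg B1 B3
  | name {I1 I2 : IfaceName} : Sg I1 = some I2 → Subty Sg (.iface I1) (.iface I2)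

section Core

variable {S : Type*} [Lattice S] [BoundedOrder S]

/-- `TypeOf`. -/
def typeOf (G : GammaEnv S) : Value → Option (Ty S)
  | .int _ => some (.int, ⊥)
  | .bool _ => some (.bool, ⊥)
  | .method _ => some (.idf, ⊥)
  | .addr X => (G.addrTy X).map (fun p => (.iface p.1, p.2))

/-- A collection of operators together with their semantics and signatures,
satisfying the safety requirement for operations. -/
structure OpSpec (S : Type*) [Lattice S] [BoundedOrder S] where
  Op : Type
  sig : Op → List BaseTy × BaseTy
  sem : Op → List Value → Value
  safe : ∀ (Sg : SigmaEnv) (G : GammaEnv S) (o : Op) (vs : List Value)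
      (Bs : List BaseTy) (B : BaseTy),
      sig o = (Bs, B) →
      List.Forall₂ (fun v b => ∃ B1 s1, typeOf G v = some (B1, s1) ∧ Subty Sg B1 b) vs Bs →
      typeOf G (sem o vs) = some (B, (⊥ : S))

end Core

/-- Expressions. -/
inductive Exp (Op : Type) where
  | val (v : Value)
  | var (x : VarName)
  | fld (e : Exp Op) (p : FieldName)
  | op (o : Op) (args : List (Exp Op))

/-- Containers: local variables, or fields of contracts. -/
abbrev Container := Sum VarName (Addr × FieldName)

section Core2

variable {S : Type*} [Lattice S] [BoundedOrder S]

mutual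
/-- Untyped evaluation of expressions, instrumented with the set of containers read. -/
inductive Eval (O : OpSpec S) : Exp O.Op → State → VarEnv → Value → Set Container → Prop where
  | val : Eval O (.val v) σ η v ∅
  | var : η x = some v → Eval O (.var x) σ η v {Sum.inl x}
  | fld : Eval O e σ η (.addr X) R → σ X = some F → F p = some v →
      Eval O (.fld e p) σ η v (R ∪ {Sum.inr (X, p)})
  | op : EvalList O es σ η vs R → O.sem o vs = v →
      Eval O (.op o es) σ η v R

/-- Untyped evaluation of lists of expressions. -/
inductive EvalList (O : OpSpec S) : List (Exp O.Op) → State → VarEnv → List Value → Set Container → Prop where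
  | nil : EvalList O [] σ η [] ∅
  | cons : Eval O e σ η v R1 → EvalList O es σ η vs R2 →
      EvalList O (e :: es) σ η (v :: vs) (R1 ∪ R2)
end

mutual
/-- Typed operational semantics of expressions: `Σ;Γ;Δ ⊨_{B_s} ⟨e,(envS,envV)⟩ → v`,
instrumented with the set of containers read. -/
inductive TEval (O : OpSpec S) (Sg : SigmaEnv) (G : GammaEnv S) (D : TyEnv S) :
    Ty S → Exp O.Op → State → VarEnv → Value → Set Container → Prop where
  | val : typeOf G v = some (B', s') → Subty Sg B' B → s' ≤ s →
      TEval O Sg G D (B, s) (.val v) σ η v ∅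
  | var : η x = some v → typeOf G v = some (B1, s1) → D x = some (B2, s2) →
      Subty Sg B1 B2 → Subty Sg B2 B → s1 ≤ s2 → s2 ≤ s →
      TEval O Sg G D (B, s) (.var x) σ η v {Sum.inl x}
  | fld : TEval O Sg G D (.iface I, s) e σ η (.addr X) R →
      σ X = some F → F p = some v →
      typeOf G v = some (B1, s1) → G.fieldTy I p = some (B2, s2) →
      Subty Sg B1 B2 → Subty Sg B2 B → s1 ≤ s2 → s2 ≤ s →
      TEval O Sg G D (B, s) (.fld e p) σ η v (R ∪ {Sum.inr (X, p)})
  | op : O.sig o = (Bs, B) →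
      TEvalList O Sg G D (Bs.map (fun b => (b, s))) es σ η vs R →
      O.sem o vs = v →
      TEval O Sg G D (B, s) (.op o es) σ η v R

/-- Typed evaluation of lists of expressions, at given component types. -/
inductive TEvalList (O : OpSpec S) (Sg : SigmaEnv) (G : GammaEnv S) (D : TyEnv S) :
    List (Ty S) → List (Exp O.Op) → State → VarEnv → List Value → Set Container → Prop where
  | nil : TEvalList O Sg G D [] [] σ η [] ∅
  | cons : TEval O Sg G D T e σ η v R1 → TEvalList O Sg G D Ts es σ η vs R2 →
      TEvalList O Sg G D (T :: Ts) (e :: es) σ η (v :: vs) (R1 ∪ R2)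
end

/-- A value is well typed for a container type: its `TypeOf`-type is a subtype,
at a lower or equal security level. -/
def WellTypedVal (Sg : SigmaEnv) (G : GammaEnv S) (v : Value) (T : Ty S) : Prop :=
  ∃ B1 s1, typeOf G v = some (B1, s1) ∧ Subty Sg B1 T.1 ∧ s1 ≤ T.2

/-- Well-typedness of a state. -/
def WellTypedState (Sg : SigmaEnv) (G : GammaEnv S) (σ : State) : Prop :=
  ∀ X I sX p T F v, G.addrTy X = some (I, sX) → G.fieldTy I p = some T →
    σ X = some F → F p = some v → WellTypedVal Sg G v T

/-- Well-typedness of a variable environment. -/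
def WellTypedVars (Sg : SigmaEnv) (G : GammaEnv S) (D : TyEnv S) (η : VarEnv) : Prop :=
  ∀ x T v, D x = some T → η x = some v → WellTypedVal Sg G v T

/-- Well-typedness `Σ;Γ;Δ ⊢ (envS,envV)`. -/
def WellTypedMem (Sg : SigmaEnv) (G : GammaEnv S) (D : TyEnv S) (σ : State) (η : VarEnv) : Prop :=
  WellTypedState Sg G σ ∧ WellTypedVars Sg G D η

/-- Consistency `Γ ⊢ (envS,envV)` (omitting method-table conditions). -/
def ConsistentMem (G : GammaEnv S) (σ : State) (η : VarEnv) : Prop :=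
  (∀ X I sX, G.addrTy X = some (I, sX) →
      ∃ F, σ X = some F ∧ ∀ p, (G.fieldTy I p).isSome → (F p).isSome) ∧
  (∀ X F p Y, σ X = some F → F p = some (.addr Y) → (σ Y).isSome) ∧
  (∀ x Y, η x = some (.addr Y) → (σ Y).isSome)

/-- The canonical construction of states and variable environments from `Σ`, `Γ`, `Δ`. -/
def Canonical (Sg : SigmaEnv) (G : GammaEnv S) (D : TyEnv S) (σ : State) (η : VarEnv) : Prop :=
  (∀ x, (η x).isSome ↔ (D x).isSome) ∧
  (∀ x T v, D x = some T → η x = some v →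
      WellTypedVal Sg G v T ∧ ∀ Y, v = .addr Y → (G.addrTy Y).isSome) ∧
  (∀ X, (σ X).isSome ↔ (G.addrTy X).isSome) ∧
  (∀ X I sX F, G.addrTy X = some (I, sX) → σ X = some F →
      (∀ p, (F p).isSome ↔ (G.fieldTy I p).isSome) ∧
      (∀ p T v, G.fieldTy I p = some T → F p = some v →
        WellTypedVal Sg G v T ∧ ∀ Y, v = .addr Y → (G.addrTy Y).isSome))

/-- `s`-equivalence of states: agreement on all fields of declared level `⊑ s`. -/
def StateEq (G : GammaEnv S) (s : S) (σ1 σ2 : State) : Prop :=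
  ∀ X I sX p B s2, G.addrTy X = some (I, sX) → G.fieldTy I p = some (B, s2) → s2 ≤ s →
    (σ1 X).bind (fun F => F p) = (σ2 X).bind (fun F => F p)

/-- `s`-equivalence of memories `Γ;Δ ⊢ (envS¹,envV¹) =_s (envS²,envV²)`. -/
def MemEq (G : GammaEnv S) (D : TyEnv S) (s : S) (σ1 : State) (η1 : VarEnv)
    (σ2 : State) (η2 : VarEnv) : Prop :=
  StateEq G s σ1 σ2 ∧ ∀ x B s2, D x = some (B, s2) → s2 ≤ s → η1 x = η2 x

/-- The container has a declared type `var(B₂,s₂)` with `s₂ ⊑ s`. -/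
def ReadTyped (G : GammaEnv S) (D : TyEnv S) (s : S) : Container → Prop
  | .inl x => ∃ B2 s2, D x = some (B2, s2) ∧ s2 ≤ s
  | .inr (X, p) => ∃ I sX B2 s2, G.addrTy X = some (I, sX) ∧
      G.fieldTy I p = some (B2, s2) ∧ s2 ≤ s

mutual
/-- The syntactic type system for expressions: `Σ;Γ;Δ ⊢ e : B_s`. -/
inductive HasTy (O : OpSpec S) (Sg : SigmaEnv) (G : GammaEnv S) (D : TyEnv S) :
    Exp O.Op → Ty S → Prop where
  | val : typeOf G v = some (B', s') → Subty Sg B' B → s' ≤ s →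
      HasTy O Sg G D (.val v) (B, s)
  | var : D x = some (B', s') → Subty Sg B' B → s' ≤ s →
      HasTy O Sg G D (.var x) (B, s)
  | fld : HasTy O Sg G D e (.iface I, s) →
      G.fieldTy I p = some (B', s') → Subty Sg B' B → s' ≤ s →
      HasTy O Sg G D (.fld e p) (B, s)
  | op : O.sig o = (Bs, B) →
      HasTyList O Sg G D es (Bs.map (fun b => (b, s))) →
      HasTy O Sg G D (.op o es) (B, s)

/-- Syntactic typing of lists of expressions. -/
inductive HasTyList (O : OpSpec S) (Sg : SigmaEnv) (G : GammaEnv S) (D : TyEnv S) :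
    List (Exp O.Op) → List (Ty S) → Prop where
  | nil : HasTyList O Sg G D [] []
  | cons : HasTy O Sg G D e T → HasTyList O Sg G D es Ts →
      HasTyList O Sg G D (e :: es) (T :: Ts)
end

end Core2

/-- Free variables of an expression. -/
inductive FVe {Op : Type} : Exp Op → VarName → Prop where
  | var : FVe (.var x) x
  | fld : FVe e x → FVe (.fld e p) x
  | op : e ∈ es → FVe e x → FVe (.op o es) x

/-- Free addresses of an expression. -/
inductive FAe {Op : Type} : Exp Op → Addr → Prop where
  | val : FAe (.val (.addr X)) X
  | fld : FAe e X → FAe (.fld e p) X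
  | op : e ∈ es → FAe e X → FAe (.op o es) X

end TinySol
namespace TinySol

lemma teval_typeOf {S : Type*} [Lattice S] [BoundedOrder S]
    {O : OpSpec S} {Sg : SigmaEnv} {G : GammaEnv S} {D : TyEnv S}
    {T e σ η v R} (h : TEval O Sg G D T e σ η v R) :
    ∃ B1 s1, typeOf G v = some (B1, s1) ∧ Subty Sg B1 T.1 := by
  induction h using TEval.rec (motive_2 := fun Ts es σ η vs R _ =>
    List.Forall₂ (fun v T => ∃ B1 s1, typeOf G v = some (B1, s1) ∧ Subty Sg B1 (Prod.fst T)) vs Ts) with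
  | val h1 h2 h3 => exact ⟨_, _, h1, h2⟩
  | var h1 h2 h3 h4 h5 h6 h7 => exact ⟨_, _, h2, h4.trans h5⟩
  | fld h1 h2 h3 h4 h5 h6 h7 h8 h9 ih => exact ⟨_, _, h4, h6.trans h7⟩
  | op hsig hlist hsem ih =>
    subst hsem
    refine ⟨_, ⊥, O.safe Sg G _ _ _ _ hsig ?_, Subty.refl _⟩
    have := List.forall₂_map_right_iff.mp ih
    exact this.imp (fun h => by simpa using h)
  | nil => exact .nil
  | cons h1 h2 ih1 ih2 => exact .cons ih1 ih2

/-- **Consistency of expression values**: under well-typedness and consistency of the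
memory, a typed evaluation can only produce an address that is in the domain of the
state. -/
theorem consistency_of_expression_values
    {S : Type*} [Lattice S] [BoundedOrder S]
    (O : OpSpec S) (Sg : SigmaEnv) (G : GammaEnv S) (D : TyEnv S)
    (B : BaseTy) (s : S) (e : Exp O.Op) (σ : State) (η : VarEnv)
    (v : Value) (R : Set Container)
    (hWT : WellTypedMem Sg G D σ η)
    (hC : ConsistentMem G σ η)
    (h : TEval O Sg G D (B, s) e σ η v R) :
    ∀ Y, v = Value.addr Y → (σ Y).isSome := by
  intro Y hv
  subst hv
  obtain ⟨B1, s1, hty, -⟩ := teval_typeOf h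
  simp only [typeOf, Option.map_eq_some_iff] at hty
  obtain ⟨⟨I, sX⟩, hG, -⟩ := hty
  obtain ⟨F, hF, -⟩ := hC.1 Y I sX hG
  simp [hF]

end TinySol
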